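/- arXiv:1807.01178 — 2 statements merged into one kernel-verified Lean document; each statement's English description precedes it below -/
import Mathlib

section
/- Let V be a finite-dimensional real inner product space and C ⊆ V a closed convex cone containing no line (i.e., C ∩ (−C) = {0}, C pointed). Then the polar cone C* = {w : ∀ z ∈ C, ⟨z, w⟩ ≤ 0} has nonempty interior. -/
/-!
The polar cone is the negative of the inner dual `C^∨`. A vector orthogonal to all of `C^∨` pairs
nonnegatively with it, as does its negative, so by the bipolar theorem `C^∨^∨ = C` both lie in `C`;
pointedness forces it to be `0`. Hence `C^∨` spans `V`, and a convex set containing `0` that spans a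
finite-dimensional space has nonempty interior.
-/

open RealInnerProductSpace Submodule

lemma Convex.add_mem_of_smul_mem {E : Type*} [AddCommGroup E] [Module ℝ E] {s : Set E}
    (hs : Convex ℝ s) (hsmul : ∀ c : ℝ, 0 ≤ c → ∀ z ∈ s, c • z ∈ s) {x y : E} (hx : x ∈ s)
    (hy : y ∈ s) : x + y ∈ s := by
  have hmid : (2 : ℝ)⁻¹ • x + (2 : ℝ)⁻¹ • y ∈ s :=
    hs hx hy (by norm_num) (by norm_num) (by norm_num)
  convert hsmul 2 zero_le_two _ hmid using 1
  rw [smul_add, smul_inv_smul₀ two_ne_zero, smul_inv_smul₀ two_ne_zero]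

lemma Convex.interior_nonempty_of_span_eq_top {V : Type*} [NormedAddCommGroup V]
    [NormedSpace ℝ V] [FiniteDimensional ℝ V] {s : Set V} (hs : Convex ℝ s) (h0 : 0 ∈ s)
    (hspan : span ℝ s = ⊤) : (interior s).Nonempty := by
  rw [hs.interior_nonempty_iff_affineSpan_eq_top, ← AffineSubspace.coe_eq_univ_iff,
    ← Set.insert_eq_of_mem h0, affineSpan_insert_zero, hspan, top_coe]

namespace ProperCone

variable {E : Type*} [NormedAddCommGroup E] [InnerProductSpace ℝ E]

lemma mem_of_mem_orthogonal_span_innerDual [CompleteSpace E] (K : ProperCone ℝ E) {u : E}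
    (hu : u ∈ (span ℝ (innerDual (K : Set E) : Set E))ᗮ) : u ∈ K := by
  rw [← innerDual_innerDual K]
  intro y hy
  exact (inner_right_of_mem_orthogonal (subset_span hy) hu).ge

lemma span_innerDual_eq_top [FiniteDimensional ℝ E] (K : ProperCone ℝ E)
    (hK : (K : Set E) ∩ -K = {0}) : span ℝ (innerDual (K : Set E) : Set E) = ⊤ := by
  rw [← orthogonal_eq_bot_iff, eq_bot_iff]
  intro u hu
  have hu' : u ∈ (K : Set E) ∩ -K :=
    ⟨K.mem_of_mem_orthogonal_span_innerDual hu,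
      K.mem_of_mem_orthogonal_span_innerDual (neg_mem hu)⟩
  rwa [hK] at hu'

lemma interior_innerDual_nonempty [FiniteDimensional ℝ E] (K : ProperCone ℝ E)
    (hK : (K : Set E) ∩ -K = {0}) : (interior (innerDual (K : Set E) : Set E)).Nonempty :=
  (innerDual _).convex.interior_nonempty_of_span_eq_top (innerDual _).zero_mem
    (span_innerDual_eq_top K hK)

end ProperCone

theorem polar_cone_nonempty_interior_of_pointed
    {V : Type*} [NormedAddCommGroup V] [InnerProductSpace ℝ V] [FiniteDimensional ℝ V]
    (C : Set V) (hCcl : IsClosed C) (hCconv : Convex ℝ C) (h0 : (0 : V) ∈ C)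
    (hcone : ∀ (c : ℝ), 0 ≤ c → ∀ z ∈ C, c • z ∈ C)
    (hpointed : C ∩ (-C) = {0}) :
    (interior {w : V | ∀ z ∈ C, ⟪z, w⟫ ≤ 0}).Nonempty := by
  let K : ProperCone ℝ V :=
    { carrier := C
      add_mem' := hCconv.add_mem_of_smul_mem hcone
      zero_mem' := h0
      smul_mem' := fun c _ hz ↦ hcone c c.2 _ hz
      isClosed' := hCcl }
  have hpolar : {w : V | ∀ z ∈ C, ⟪z, w⟫ ≤ 0} =
      Homeomorph.neg V ⁻¹' ProperCone.innerDual (K : Set V) := by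
    ext w
    simp [K, inner_neg_right]
  rw [hpolar, ← Homeomorph.preimage_interior]
  exact (K.interior_innerDual_nonempty hpointed).preimage (Homeomorph.neg V).surjective
end

section
/- Let S ⊆ V be a nonempty closed convex subset of a finite-dimensional real inner product space, with asymptotic cone S_∞ and polar cone S_∞* = {w : ∀ z ∈ S_∞, ⟨z, w⟩ ≤ 0}. Then the support function h_S(w) = sup_{z ∈ S} ⟨z, w⟩ is finite for every w in the interior of S_∞*, and h_S(w) = +∞ for every w ∉ S_∞*. -/
/-!
If `h_S(w) = +∞` for some `w` in the interior of `S_∞*`, then the superlevel set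
`S ∩ {z | 0 ≤ ⟪z, w⟫}` is an unbounded closed convex set, so in finite dimension its asymptotic
cone contains a direction `v ≠ 0`. Such a `v` lies in `S_∞` and satisfies `0 ≤ ⟪v, w⟫`, whereas
every nonzero `v ∈ S_∞` has `⟪v, w⟫ < 0` because `w` can be pushed a little in the direction `v`
without leaving `S_∞*`. Conversely, if `⟪z, w⟫ > 0` for some `z ∈ S_∞`, then `⟪·, w⟫` is unbounded
along the points `s₀ + n • z` of `S`.
-/

open RealInnerProductSpace Bornology Filter Topology

def recessionCone {M : Type*} [Add M] (S : Set M) : Set M := {z | ∀ s ∈ S, z + s ∈ S}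

theorem nsmul_add_mem_of_mem_recessionCone {M : Type*} [AddMonoid M] {S : Set M} {z : M}
    (hz : z ∈ recessionCone S) (n : ℕ) {s : M} (hs : s ∈ S) : n • z + s ∈ S := by
  induction n generalizing s with
  | zero => simpa using hs
  | succ n ih => rw [succ_nsmul, add_assoc]; exact ih (hz s hs)

theorem Convex.mem_recessionCone_of_mem_asymptoticCone {V : Type*} [AddCommGroup V]
    [Module ℝ V] [TopologicalSpace V] [IsTopologicalAddGroup V] [ContinuousSMul ℝ V]
    {S : Set V} (hSconv : Convex ℝ S) (hScl : IsClosed S) {v : V}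
    (hv : v ∈ asymptoticCone ℝ S) : v ∈ recessionCone S := fun s hs => by
  simpa using hSconv.smul_vadd_mem_of_isClosed_of_mem_asymptoticCone hScl zero_le_one hv hs

theorem EReal.sSup_coe_image_lt_top_iff {α : Type*} {f : α → ℝ} {s : Set α} :
    sSup ((fun x => (f x : EReal)) '' s) < ⊤ ↔ BddAbove (f '' s) := by
  constructor
  · intro h
    obtain ⟨r, hr, -⟩ := EReal.lt_iff_exists_real_btwn.mp h
    refine ⟨r, ?_⟩
    rintro _ ⟨x, hx, rfl⟩
    exact EReal.coe_le_coe_iff.mp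
      ((le_sSup (Set.mem_image_of_mem (fun x => (f x : EReal)) hx)).trans hr.le)
  · rintro ⟨r, hr⟩
    refine lt_of_le_of_lt (sSup_le ?_) (EReal.coe_lt_top r)
    rintro _ ⟨x, hx, rfl⟩
    exact EReal.coe_le_coe_iff.mpr (hr ⟨x, hx, rfl⟩)

theorem nonneg_of_forall_le_add_mul {a b c : ℝ} (h : ∀ t : ℝ, 0 ≤ t → c ≤ a + t * b) :
    0 ≤ b := by
  by_contra! hb
  have := h ((|a - c| + 1) / -b) (div_nonneg (by positivity) (by linarith))
  rw [div_mul_eq_mul_div, div_neg, mul_div_cancel_right₀ _ hb.ne] at this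
  linarith [le_abs_self (a - c)]

section InnerProductSpace

variable {V : Type*} [NormedAddCommGroup V] [InnerProductSpace ℝ V]

def polarCone (K : Set V) : Set V := {w | ∀ z ∈ K, ⟪z, w⟫ ≤ 0}

theorem inner_neg_of_mem_interior_polarCone {K : Set V} {w z : V}
    (hw : w ∈ interior (polarCone K)) (hz : z ∈ K) (hz0 : z ≠ 0) : ⟪z, w⟫ < 0 := by
  have hpush : Tendsto (fun δ : ℝ => w + δ • z) (𝓝[>] 0) (𝓝 w) :=
    ((continuous_const.add (continuous_id.smul continuous_const)).tendsto' 0 w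
      (by simp)).mono_left nhdsWithin_le_nhds
  obtain ⟨δ, hδw, hδ⟩ :=
    ((hpush.eventually (mem_interior_iff_mem_nhds.mp hw)).and self_mem_nhdsWithin).exists
  have hle : ⟪z, w⟫ + δ * ‖z‖ ^ 2 ≤ 0 := by
    simpa [inner_add_right, real_inner_smul_right, real_inner_self_eq_norm_sq] using hδw z hz
  have : 0 < δ * ‖z‖ ^ 2 := mul_pos hδ (by positivity)
  linarith

theorem not_bddAbove_inner_image_of_notMem_polarCone {S : Set V} {w : V}
    (hw : w ∉ polarCone (recessionCone S)) (hSne : S.Nonempty) :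
    ¬BddAbove ((fun z => ⟪z, w⟫) '' S) := by
  obtain ⟨s₀, hs₀⟩ := hSne
  simp only [polarCone, Set.mem_ofPred_eq, not_forall, not_le] at hw
  obtain ⟨z, hz, hzw⟩ := hw
  refine not_bddAbove_iff.mpr fun r => ?_
  obtain ⟨n, hn⟩ := exists_nat_gt ((r - ⟪s₀, w⟫) / ⟪z, w⟫)
  refine ⟨_, ⟨n • z + s₀, nsmul_add_mem_of_mem_recessionCone hz n hs₀, rfl⟩, ?_⟩
  rw [div_lt_iff₀ hzw] at hn
  simp only [inner_add_left, ← Nat.cast_smul_eq_nsmul ℝ, real_inner_smul_left]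
  linarith

variable [FiniteDimensional ℝ V] {S : Set V}

theorem isCompact_inter_inner_ge_of_mem_interior_polarCone (hScl : IsClosed S)
    (hSconv : Convex ℝ S) {w : V}
    (hw : w ∈ interior (polarCone (recessionCone S))) (c : ℝ) :
    IsCompact (S ∩ {z | c ≤ ⟪z, w⟫}) := by
  set T := S ∩ {z | c ≤ ⟪z, w⟫}
  have hTcl : IsClosed T := hScl.inter (isClosed_le continuous_const (by fun_prop))
  refine Metric.isCompact_of_isClosed_isBounded hTcl ?_
  by_contra hT
  obtain ⟨v, hv0, hvT⟩ := not_bounded_iff_exists_ne_zero_mem_asymptoticCone.mp hT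
  obtain ⟨p, hp⟩ := nonempty_of_not_isBounded hT
  have hTconv : Convex ℝ T := hSconv.inter <| convex_halfSpace_ge
    ⟨fun x y => inner_add_left x y w, fun a x => real_inner_smul_left x w a⟩ c
  have hvS : v ∈ recessionCone S :=
    hSconv.mem_recessionCone_of_mem_asymptoticCone hScl
      (asymptoticCone_mono Set.inter_subset_left hvT)
  have hray : ∀ t : ℝ, 0 ≤ t → c ≤ ⟪p, w⟫ + t * ⟪v, w⟫ := fun t ht => by
    have := (hTconv.smul_vadd_mem_of_isClosed_of_mem_asymptoticCone hTcl ht hvT hp).2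
    simpa [inner_add_left, real_inner_smul_left, add_comm] using this
  exact (inner_neg_of_mem_interior_polarCone hw hvS hv0).not_ge
    (nonneg_of_forall_le_add_mul hray)

theorem bddAbove_inner_image_of_mem_interior_polarCone (hScl : IsClosed S)
    (hSconv : Convex ℝ S) {w : V}
    (hw : w ∈ interior (polarCone (recessionCone S))) :
    BddAbove ((fun z => ⟪z, w⟫) '' S) := by
  have hT := isCompact_inter_inner_ge_of_mem_interior_polarCone hScl hSconv hw 0
  have hTbdd := hT.bddAbove_image (f := fun z => ⟪z, w⟫) (by fun_prop)
  refine (hTbdd.union (bddAbove_Iic (a := (0 : ℝ)))).mono ?_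
  rintro _ ⟨z, hz, rfl⟩
  rcases le_or_gt 0 ⟪z, w⟫ with h | h
  · exact Or.inl ⟨z, ⟨hz, h⟩, rfl⟩
  · exact Or.inr h.le

end InnerProductSpace

theorem support_function_finite_on_interior_polar
    {V : Type*} [NormedAddCommGroup V] [InnerProductSpace ℝ V] [FiniteDimensional ℝ V]
    (S : Set V) (hSne : S.Nonempty) (hScl : IsClosed S) (hSconv : Convex ℝ S) :
    (∀ w ∈ interior {w : V | ∀ z ∈ {z : V | ∀ s ∈ S, z + s ∈ S}, ⟪z, w⟫ ≤ 0},
        ⊥ < sSup ((fun z => ((⟪z, w⟫ : ℝ) : EReal)) '' S) ∧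
          sSup ((fun z => ((⟪z, w⟫ : ℝ) : EReal)) '' S) < ⊤) ∧
      ∀ w ∉ {w : V | ∀ z ∈ {z : V | ∀ s ∈ S, z + s ∈ S}, ⟪z, w⟫ ≤ 0},
        sSup ((fun z => ((⟪z, w⟫ : ℝ) : EReal)) '' S) = ⊤ := by
  refine ⟨fun w hw => ⟨?_, ?_⟩, fun w hw => ?_⟩
  · obtain ⟨s₀, hs₀⟩ := hSne
    exact (EReal.bot_lt_coe _).trans_le (le_sSup ⟨s₀, hs₀, rfl⟩)
  · exact EReal.sSup_coe_image_lt_top_iff.mpr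
      (bddAbove_inner_image_of_mem_interior_polarCone hScl hSconv hw)
  · exact not_lt_top_iff.mp <| mt EReal.sSup_coe_image_lt_top_iff.mp
      (not_bddAbove_inner_image_of_notMem_polarCone hw hSne)
end
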